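/- Let K be a field and A, A' two finite-dimensional K-algebras. Suppose there exists an interpolation system for A' by A: a K-algebra B equipped with K-algebra morphisms f : B → A and f' : B → A', and K-linear subspaces E₁, E₂ ⊆ B, such that (i) the restriction of f to the linear span E₁E₂ of the products e₁e₂ (e₁ ∈ E₁, e₂ ∈ E₂) is injective, and (ii) the restrictions of f' to E₁ and to E₂ are both surjective onto A'. Then μ(A'/K) ≤ μ(A/K). -/

import Mathlib

/-!
An interpolation system lets one multiply in `A'` through `A`: lift `x, y ∈ A'` to `E₁, E₂`
by linear sections of `f'`, multiply their images under `f` in `A`, and come back with a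
linear map `γ : A → A'` that undoes `f` on `E₁E₂` (possible since `f` is injective there)
and then applies `f'`. Composing an optimal bilinear algorithm for `A` with these three
linear maps gives a bilinear algorithm for `A'` of the same length.
-/

open Finset

/-- The bilinear complexity of a `K`-algebra `A`. -/
noncomputable def mu (K A : Type*) [Field K] [NonUnitalNonAssocRing A] [Module K A] : ℕ :=
  sInf {n : ℕ | ∃ (φ ψ : Fin n → (A →ₗ[K] K)) (w : Fin n → A),
    ∀ x y : A, x * y = ∑ i, (φ i x * ψ i y) • w i}

section BilinearAlgorithm

variable (K : Type*) [Field K]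

def HasBilinearAlgorithm (A : Type*) [NonUnitalNonAssocRing A] [Module K A] (n : ℕ) : Prop :=
  ∃ (φ ψ : Fin n → (A →ₗ[K] K)) (w : Fin n → A),
    ∀ x y : A, x * y = ∑ i, (φ i x * ψ i y) • w i

variable {K} {A A' : Type*} [NonUnitalNonAssocRing A] [Module K A]
  [NonUnitalNonAssocRing A'] [Module K A']

theorem mu_le_of_hasBilinearAlgorithm {n : ℕ} (h : HasBilinearAlgorithm K A n) : mu K A ≤ n :=
  Nat.sInf_le h

theorem hasBilinearAlgorithm_card {ι : Type*} [Fintype ι]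
    (φ ψ : ι → (A →ₗ[K] K)) (w : ι → A)
    (h : ∀ x y : A, x * y = ∑ i, (φ i x * ψ i y) • w i) :
    HasBilinearAlgorithm K A (Fintype.card ι) := by
  let e := Fintype.equivFin ι
  refine ⟨fun i => φ (e.symm i), fun i => ψ (e.symm i), fun i => w (e.symm i), fun x y => ?_⟩
  rw [h, ← e.symm.sum_comp]

theorem hasBilinearAlgorithm_finrank_mul_finrank [SMulCommClass K A A] [IsScalarTower K A A]
    [FiniteDimensional K A] :
    HasBilinearAlgorithm K A (Module.finrank K A * Module.finrank K A) := by
  let b := Module.finBasis K A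
  convert hasBilinearAlgorithm_card (fun p : Fin _ × Fin _ => b.coord p.1)
    (fun p => b.coord p.2) (fun p => b p.1 * b p.2) (fun x y => ?_) using 1
  · simp
  conv_lhs => rw [← b.sum_repr x, ← b.sum_repr y]
  rw [sum_mul_sum, ← sum_product']
  exact sum_congr rfl fun p _ => smul_mul_smul_comm _ _ _ _

theorem hasBilinearAlgorithm_mu [SMulCommClass K A A] [IsScalarTower K A A]
    [FiniteDimensional K A] : HasBilinearAlgorithm K A (mu K A) :=
  Nat.sInf_mem (s := {n | HasBilinearAlgorithm K A n})
    ⟨_, hasBilinearAlgorithm_finrank_mul_finrank⟩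

theorem HasBilinearAlgorithm.of_mul_eq {n : ℕ} (h : HasBilinearAlgorithm K A n)
    (α β : A' →ₗ[K] A) (γ : A →ₗ[K] A') (hmul : ∀ x y : A', x * y = γ (α x * β y)) :
    HasBilinearAlgorithm K A' n := by
  obtain ⟨φ, ψ, w, hw⟩ := h
  refine ⟨fun i => φ i ∘ₗ α, fun i => ψ i ∘ₗ β, fun i => γ (w i), fun x y => ?_⟩
  simp only [hmul, hw, map_sum, map_smul, LinearMap.comp_apply]

theorem mu_le_mu_of_mul_eq [SMulCommClass K A A] [IsScalarTower K A A] [FiniteDimensional K A]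
    (α β : A' →ₗ[K] A) (γ : A →ₗ[K] A') (hmul : ∀ x y : A', x * y = γ (α x * β y)) :
    mu K A' ≤ mu K A :=
  mu_le_of_hasBilinearAlgorithm (hasBilinearAlgorithm_mu.of_mul_eq α β γ hmul)

end BilinearAlgorithm

section LinearExtension

variable {K M N P : Type*} [Field K] [AddCommGroup M] [Module K M] [AddCommGroup N] [Module K N]
  [AddCommGroup P] [Module K P]

theorem LinearMap.exists_comp_eqOn_of_injOn (f : M →ₗ[K] N) (g : M →ₗ[K] P)
    {V : Submodule K M} (hinj : Set.InjOn f V) : ∃ γ : N →ₗ[K] P, ∀ v ∈ V, γ (f v) = g v := by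
  have hker : LinearMap.ker (f ∘ₗ V.subtype) = ⊥ :=
    LinearMap.ker_eq_bot.mpr fun u v huv => Subtype.ext (hinj u.2 v.2 huv)
  obtain ⟨l, hl⟩ := (f ∘ₗ V.subtype).exists_leftInverse_of_injective hker
  exact ⟨g ∘ₗ V.subtype ∘ₗ l, fun v hv => by
    simpa using congrArg (g ∘ₗ V.subtype) (LinearMap.congr_fun hl ⟨v, hv⟩)⟩

theorem LinearMap.exists_section_of_surjOn (f : M →ₗ[K] P) {E : Submodule K M}
    (hsurj : ∀ a : P, ∃ e ∈ E, f e = a) :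
    ∃ σ : P →ₗ[K] M, ∀ a, σ a ∈ E ∧ f (σ a) = a := by
  have hrange : LinearMap.range (f ∘ₗ E.subtype) = ⊤ :=
    LinearMap.range_eq_top.mpr fun a => by
      obtain ⟨e, he, rfl⟩ := hsurj a
      exact ⟨⟨e, he⟩, rfl⟩
  obtain ⟨σ, hσ⟩ := (f ∘ₗ E.subtype).exists_rightInverse_of_surjective hrange
  exact ⟨E.subtype ∘ₗ σ, fun a => ⟨(σ a).2, LinearMap.congr_fun hσ a⟩⟩

end LinearExtension

theorem stmt_10_general (K : Type*) [Field K] (A A' B : Type*) [Ring A] [Ring A'] [Ring B]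
    [Algebra K A] [Algebra K A'] [Algebra K B]
    [FiniteDimensional K A]
    (f : B →ₐ[K] A) (f' : B →ₐ[K] A') (E₁ E₂ : Submodule K B)
    (hinj : Set.InjOn f ((E₁ * E₂ : Submodule K B) : Set B))
    (hsurj₁ : ∀ a : A', ∃ e ∈ E₁, f' e = a)
    (hsurj₂ : ∀ a : A', ∃ e ∈ E₂, f' e = a) :
    mu K A' ≤ mu K A := by
  obtain ⟨σ₁, hσ₁⟩ := f'.toLinearMap.exists_section_of_surjOn hsurj₁
  obtain ⟨σ₂, hσ₂⟩ := f'.toLinearMap.exists_section_of_surjOn hsurj₂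
  obtain ⟨γ, hγ⟩ := f.toLinearMap.exists_comp_eqOn_of_injOn f'.toLinearMap hinj
  simp only [AlgHom.toLinearMap_apply] at hσ₁ hσ₂ hγ
  refine mu_le_mu_of_mul_eq (f.toLinearMap ∘ₗ σ₁) (f.toLinearMap ∘ₗ σ₂) γ
    fun x y => ?_
  have hmem : σ₁ x * σ₂ y ∈ E₁ * E₂ := Submodule.mul_mem_mul (hσ₁ x).1 (hσ₂ y).1
  calc x * y = f' (σ₁ x * σ₂ y) := by rw [map_mul, (hσ₁ x).2, (hσ₂ y).2]
    _ = γ (f (σ₁ x * σ₂ y)) := (hγ _ hmem).symm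
    _ = γ (f (σ₁ x) * f (σ₂ y)) := by rw [map_mul]

/-- If there is an interpolation system for `A'` by `A` (a `K`-algebra `B` with
morphisms `f : B → A`, `f' : B → A'`, and subspaces `E₁, E₂ ⊆ B` such that `f` is
injective on the span `E₁E₂` of products, and `f'` maps both `E₁` and `E₂` onto `A'`),
then `μ(A'/K) ≤ μ(A/K)`. -/
theorem stmt_10 (K : Type*) [Field K] (A A' B : Type*) [Ring A] [Ring A'] [Ring B]
    [Algebra K A] [Algebra K A'] [Algebra K B]
    [FiniteDimensional K A] [FiniteDimensional K A']
    (f : B →ₐ[K] A) (f' : B →ₐ[K] A') (E₁ E₂ : Submodule K B)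
    (hinj : Set.InjOn f ((E₁ * E₂ : Submodule K B) : Set B))
    (hsurj₁ : ∀ a : A', ∃ e ∈ E₁, f' e = a)
    (hsurj₂ : ∀ a : A', ∃ e ∈ E₂, f' e = a) :
    mu K A' ≤ mu K A :=
  stmt_10_general K A A' B f f' E₁ E₂ hinj hsurj₁ hsurj₂
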